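/- Let g be the Lorentzian metric Lie algebra on pseudo-orthonormal basis u1,u2,u3,u4 (⟨u1,u2⟩=⟨u3,u3⟩=⟨u4,u4⟩=1) with brackets [u2,u4]=−(γ2−1)u3 and [u3,u4]=(γ2+1)u1. Then u1 is a parallel null vector: ∇_x u1 = 0 for all x ∈ g, where ∇ is the Levi-Civita connection determined by the Koszul formula. -/

import Mathlib

noncomputable section

open Finset Polynomial

abbrev V : Type := Fin 4 → ℝ

def e (i : Fin 4) : V := Pi.single i 1

/-- bilinear bracket determined by structure constants `c`. -/
def br (c : Fin 4 → Fin 4 → V) (x y : V) : V :=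
  ∑ i : Fin 4, ∑ j : Fin 4, (x i * y j) • c i j

/-- bilinear form determined by the matrix `G`. -/
def gmet (G : Matrix (Fin 4) (Fin 4) ℝ) (x y : V) : ℝ :=
  ∑ i : Fin 4, ∑ j : Fin 4, x i * y j * G i j

/-- `D` satisfies the Koszul formula of the Levi-Civita connection. -/
def Koszul (G : Matrix (Fin 4) (Fin 4) ℝ) (c : Fin 4 → Fin 4 → V) (D : V → V → V) : Prop :=
  ∀ x y z : V, 2 * gmet G (D x y) z =
    gmet G (br c x y) z - gmet G (br c y z) x + gmet G (br c z x) y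

/-- curvature tensor `R(x,y)z`. -/
def Rcurv (c : Fin 4 → Fin 4 → V) (D : V → V → V) (x y z : V) : V :=
  D x (D y z) - D y (D x z) - D (br c x y) z

/-- Ricci tensor `ρ(x,y) = tr (z ↦ R(z,x)y)`. -/
def ricciT (c : Fin 4 → Fin 4 → V) (D : V → V → V) (x y : V) : ℝ :=
  ∑ i : Fin 4, Rcurv c D (e i) x y i

/-- scalar curvature: metric trace of the Ricci tensor (here `G` is its own inverse). -/
def scalCurv (G : Matrix (Fin 4) (Fin 4) ℝ) (c : Fin 4 → Fin 4 → V) (D : V → V → V) : ℝ :=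
  ∑ i : Fin 4, ∑ j : Fin 4, G i j * ricciT c D (e i) (e j)

/-- metric with ⟨u1,u2⟩=⟨u3,u3⟩=⟨u4,u4⟩=1. -/
def Gpp : Matrix (Fin 4) (Fin 4) ℝ := !![0,1,0,0; 1,0,0,0; 0,0,1,0; 0,0,0,1]

/-- metric with ⟨u1,u1⟩=⟨u2,u2⟩=⟨u3,u4⟩=1. -/
def Gdeg : Matrix (Fin 4) (Fin 4) ℝ := !![1,0,0,0; 0,1,0,0; 0,0,0,1; 0,0,1,0]

/-- orthonormal metric with e4 timelike. -/
def Gort : Matrix (Fin 4) (Fin 4) ℝ := !![1,0,0,0; 0,1,0,0; 0,0,1,0; 0,0,0,-1]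

def c8 (g2 : ℝ) : Fin 4 → Fin 4 → V :=
  let b24 : V := ![0, 0, -(g2 - 1), 0]
  let b34 : V := ![g2 + 1, 0, 0, 0]
  ![![0, 0, 0, 0],
    ![0, 0, 0, b24],
    ![0, 0, 0, b34],
    ![0, -b24, -b34, 0]]

/-!
The vector `u1` is central, and it is orthogonal to the derived algebra `span {u1, u3}` because
`u1` is null and `⟨u1, u3⟩ = 0`. All three terms of the Koszul formula for `⟨∇_x u1, z⟩` therefore
vanish, and nondegeneracy of the metric gives `∇_x u1 = 0`.
-/

open Matrix

section Coordinates

variable (G : Matrix (Fin 4) (Fin 4) ℝ) (c : Fin 4 → Fin 4 → V)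

theorem gmet_eq_dotProduct_mulVec (x y : V) : gmet G x y = x ⬝ᵥ G *ᵥ y := by
  simp only [gmet, dotProduct, mulVec, Finset.mul_sum]
  exact Finset.sum_congr rfl fun i _ => Finset.sum_congr rfl fun j _ => by ring

theorem gmet_zero_left (y : V) : gmet G 0 y = 0 := by
  simp [gmet]

theorem gmet_e_right (x : V) (k : Fin 4) : gmet G x (e k) = ∑ i, x i * G i k := by
  simp [gmet, e, Pi.single_apply]

theorem gmet_e_e (i j : Fin 4) : gmet G (e i) (e j) = G i j := by
  rw [gmet_e_right]
  simp [e, Pi.single_apply]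

theorem br_e_right (x : V) (k : Fin 4) : br c x (e k) = ∑ i, x i • c i k := by
  simp [br, e, Pi.single_apply]

theorem br_e_left (y : V) (k : Fin 4) : br c (e k) y = ∑ j, y j • c k j := by
  simp [br, e, Pi.single_apply]

theorem br_apply (x y : V) (k : Fin 4) : br c x y k = ∑ i, ∑ j, x i * y j * c i j k := by
  simp [br, Finset.sum_apply]

variable {G} in
theorem eq_zero_of_forall_gmet_eq_zero (hG : G.det ≠ 0) {v : V} (hv : ∀ z, gmet G v z = 0) :
    v = 0 :=
  (nondegenerate_of_det_ne_zero hG).eq_zero_of_ortho fun w => by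
    rw [← gmet_eq_dotProduct_mulVec, hv]

end Coordinates

theorem Koszul.apply_eq_zero_of_central {G : Matrix (Fin 4) (Fin 4) ℝ} {c : Fin 4 → Fin 4 → V}
    {D : V → V → V} (hD : Koszul G c D) (hG : G.det ≠ 0) {y : V}
    (hleft : ∀ x, br c x y = 0) (hright : ∀ z, br c y z = 0)
    (hortho : ∀ z x, gmet G (br c z x) y = 0) (x : V) : D x y = 0 :=
  eq_zero_of_forall_gmet_eq_zero hG fun z => by
    have h := hD x y z
    rw [hleft, hright, hortho, gmet_zero_left, gmet_zero_left] at h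
    linarith

theorem det_Gpp : Gpp.det = -1 := by
  simp [Gpp, det_succ_row_zero, Fin.sum_univ_succ, Fin.succAbove]

theorem gmet_Gpp_e_zero (x : V) : gmet Gpp x (e 0) = x 1 := by
  simp [gmet_e_right, Gpp, Fin.sum_univ_four]

section c8

variable (g2 : ℝ)

theorem c8_zero_left (j : Fin 4) : c8 g2 0 j = 0 := by
  fin_cases j <;> simp [c8]

theorem c8_zero_right (i : Fin 4) : c8 g2 i 0 = 0 := by
  fin_cases i <;> simp [c8]

theorem c8_apply_one (i j : Fin 4) : c8 g2 i j 1 = 0 := by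
  fin_cases i <;> fin_cases j <;> simp [c8]

theorem br_c8_e_zero (x : V) : br (c8 g2) x (e 0) = 0 := by
  simp [br_e_right, c8_zero_right]

theorem br_c8_e_zero_left (z : V) : br (c8 g2) (e 0) z = 0 := by
  simp [br_e_left, c8_zero_left]

theorem gmet_Gpp_br_c8_e_zero (z x : V) : gmet Gpp (br (c8 g2) z x) (e 0) = 0 := by
  simp [gmet_Gpp_e_zero, br_apply, c8_apply_one]

end c8

/-- u1 is a parallel null vector. -/
theorem stmt8 (g2 : ℝ) (D : V → V → V) (hD : Koszul Gpp (c8 g2) D) :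
    gmet Gpp (e 0) (e 0) = 0 ∧ ∀ x : V, D x (e 0) = 0 :=
  ⟨by simp [gmet_e_e, Gpp],
    hD.apply_eq_zero_of_central (by simp [det_Gpp]) (br_c8_e_zero g2) (br_c8_e_zero_left g2)
      (gmet_Gpp_br_c8_e_zero g2)⟩
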